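/- arXiv:quant-ph/0105151 — 4 statements merged into one kernel-verified Lean document; each statement's English description precedes it below -/
import Mathlib

section
/- (Improved quantum Gilbert–Varshamov bound) If ((1-2^{-2k})/(1-2^{-2n})) · 2^{-(n-k)} · Σ_{i=1}^{d-1} binom(n,i)·3^i < 1, then there exists an (n-k)-dimensional self-orthogonal subspace C ⊆ 𝔽_2^{2n} (standard symplectic form) such that every nonzero vector (a|b) ∈ C^⊥ \ C has symplectic weight at least d, where the symplectic weight of (a|b) is the number of indices i with (a_i, b_i) ≠ (0,0). -/
/-- The standard symplectic form on 𝔽₂ⁿ × 𝔽₂ⁿ ≅ 𝔽₂^{2n}: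
`⟨(a|b),(a'|b')⟩ = ⟨a,b'⟩ - ⟨a',b⟩`. -/
noncomputable def sympForm (n : ℕ) :
    LinearMap.BilinForm (ZMod 2) ((Fin n → ZMod 2) × (Fin n → ZMod 2)) :=
  LinearMap.mk₂ (ZMod 2)
    (fun v w => (∑ i, v.1 i * w.2 i) - ∑ i, w.1 i * v.2 i)
    (by intro x y z; simp [add_mul, mul_add, Finset.sum_add_distrib]; ring)
    (by intro c x y; simp [Finset.mul_sum, mul_sub]; congr 1 <;> exact Finset.sum_congr rfl (fun i _ => by ring))
    (by intro x y z; simp [add_mul, mul_add, Finset.sum_add_distrib]; ring)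
    (by intro c x y; simp [Finset.mul_sum, mul_sub]; congr 1 <;> exact Finset.sum_congr rfl (fun i _ => by ring))


/-- The symplectic weight of `(a|b)`: the number of positions `i` with
`(aᵢ, bᵢ) ≠ (0,0)`. -/
def sympWeight {n : ℕ} (v : (Fin n → ZMod 2) × (Fin n → ZMod 2)) : ℕ :=
  (Finset.univ.filter (fun i => v.1 i ≠ 0 ∨ v.2 i ≠ 0)).card

namespace IQGV

variable {n : ℕ}

abbrev V (n : ℕ) := (Fin n → ZMod 2) × (Fin n → ZMod 2)

lemma sympForm_apply (v w : V n) :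
    sympForm n v w = (∑ i, v.1 i * w.2 i) - ∑ i, w.1 i * v.2 i := rfl

lemma sympForm_alt (v : V n) : sympForm n v v = 0 := by
  simp [sympForm_apply]

lemma sympForm_comm (v w : V n) : sympForm n v w = sympForm n w v := by
  simp only [sympForm_apply]
  have : ∀ a b : ZMod 2, a - b = b - a := by decide
  apply this

lemma sympForm_refl : (sympForm n).IsRefl := by
  intro v w h
  rw [sympForm_comm] at h; exact h

lemma sympForm_nondeg : (sympForm n).Nondegenerate := by
  have hl : ∀ v : V n, (∀ w, sympForm n v w = 0) → v = 0 := by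
   intro v hv
   ext i
   · have := hv (0, Pi.single i 1)
     simpa [sympForm_apply, Pi.single_apply, mul_ite] using this
   · have := hv (Pi.single i 1, 0)
     have h2 : (∑ j, v.1 j * (0:Fin n → ZMod 2) j) - ∑ j, (Pi.single i 1 : Fin n → ZMod 2) j * v.2 j = 0 := this
     simp [Pi.single_apply, ite_mul] at h2
     simpa [sub_eq_zero, eq_comm] using h2.symm
  exact ⟨hl, fun w hw => hl w (fun v => by rw [sympForm_comm]; exact hw v)⟩

end IQGV

namespace IQGV

variable {n : ℕ}

lemma two_smul_zero (x : V n) : x + x = 0 := by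
  have : x + x = ((1 : ZMod 2) + 1) • x := by rw [add_smul, one_smul]
  rw [this, show (1 : ZMod 2) + 1 = 0 from rfl, zero_smul]

noncomputable def tmap (w : V n) : V n →ₗ[ZMod 2] V n :=
  LinearMap.id + (((sympForm n).flip w).smulRight w)

lemma tmap_apply (w x : V n) : tmap w x = x + (sympForm n x w) • w := rfl

lemma tmap_invol (w : V n) : Function.Involutive (tmap w) := by
  intro x
  simp only [tmap_apply, map_add, LinearMap.add_apply, map_smul, LinearMap.smul_apply,
    sympForm_alt, smul_eq_mul, mul_zero, add_zero, smul_zero, zero_smul]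
  rw [add_assoc, ← add_smul]
  have : ∀ a : ZMod 2, a + a = 0 := by decide
  rw [this, zero_smul, add_zero]

lemma tmap_isometry (w x y : V n) :
    sympForm n (tmap w x) (tmap w y) = sympForm n x y := by
  simp only [tmap_apply, map_add, LinearMap.add_apply, map_smul, LinearMap.smul_apply,
    sympForm_alt, smul_eq_mul, mul_zero, add_zero, smul_zero, zero_smul]
  rw [sympForm_comm w y]
  have : ∀ a b c : ZMod 2, a + b * c + c * b = a := by decide
  exact this _ _ _


noncomputable def transv (w : V n) : V n ≃ₗ[ZMod 2] V n :=
  LinearEquiv.ofInvolutive (tmap w) (tmap_invol w)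

lemma transv_apply (w x : V n) : transv w x = x + (sympForm n x w) • w := rfl

lemma transv_isometry (w x y : V n) :
    sympForm n (transv w x) (transv w y) = sympForm n x y := tmap_isometry w x y

lemma zmod2_cases (a : ZMod 2) : a = 0 ∨ a = 1 := by revert a; decide

lemma exists_pair {v : V n} (hv : v ≠ 0) : ∃ u, sympForm n v u = 1 := by
  by_contra hcon
  push_neg at hcon
  apply hv
  apply sympForm_nondeg.1
  intro u
  rcases zmod2_cases (sympForm n v u) with h | h
  · exact h
  · exact absurd h (hcon u)

lemma transv_sends {e v : V n} (h : sympForm n e v = 1) : transv (e + v) e = v := by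
  rw [transv_apply, map_add, sympForm_alt, zero_add, h, one_smul, ← add_assoc,
    two_smul_zero, zero_add]

lemma exists_isometry {e v : V n} (he : e ≠ 0) (hv : v ≠ 0) :
    ∃ g : V n ≃ₗ[ZMod 2] V n, (∀ x y, sympForm n (g x) (g y) = sympForm n x y) ∧ g e = v := by
  rcases eq_or_ne e v with rfl | hev
  · exact ⟨LinearEquiv.refl _ _, fun x y => rfl, rfl⟩
  rcases zmod2_cases (sympForm n e v) with h0 | h1
  · -- find u with ⟨e,u⟩ = 1 = ⟨v,u⟩, go e → u → v
    obtain ⟨u1, hu1⟩ := exists_pair he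
    obtain ⟨u2, hu2⟩ := exists_pair hv
    obtain ⟨u, hue, huv⟩ : ∃ u, sympForm n e u = 1 ∧ sympForm n v u = 1 := by
      rcases zmod2_cases (sympForm n v u1) with h | h
      · rcases zmod2_cases (sympForm n e u2) with h' | h'
        · refine ⟨u1 + u2, ?_, ?_⟩ <;> rw [map_add] <;>
            simp [hu1, hu2, h, h']
        · exact ⟨u2, h', hu2⟩
      · exact ⟨u1, hu1, h⟩
    have heu : sympForm n e u = 1 := hue
    have huv' : sympForm n u v = 1 := by rw [sympForm_comm]; exact huv
    refine ⟨(transv (e + u)).trans (transv (u + v)), fun x y => ?_, ?_⟩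
    · simp only [LinearEquiv.trans_apply, transv_isometry]
    · simp only [LinearEquiv.trans_apply, transv_sends heu, transv_sends huv']
  · exact ⟨transv (e + v), fun x y => transv_isometry _ x y, transv_sends h1⟩

open Finset

lemma sympWeight_eq_zero_iff (v : V n) : sympWeight v = 0 ↔ v = 0 := by
  unfold sympWeight
  rw [Finset.card_eq_zero, Finset.filter_eq_empty_iff]
  constructor
  · intro h
    ext i
    · have := h (Finset.mem_univ i); push_neg at this; exact this.1
    · have := h (Finset.mem_univ i); push_neg at this; exact this.2
  · rintro rfl i _
    simp

lemma card_fun_weight (m : ℕ) :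
    (univ.filter fun f : Fin n → ZMod 2 × ZMod 2 =>
      (univ.filter fun i => f i ≠ 0).card = m).card = n.choose m * 3 ^ m := by
  classical
  have hA3 : ((univ : Finset (ZMod 2 × ZMod 2)).erase 0).card = 3 := by decide
  set A : Finset (Fin n) → Finset (Fin n → ZMod 2 × ZMod 2) := fun s =>
    Fintype.piFinset (fun i => if i ∈ s then (univ : Finset (ZMod 2 × ZMod 2)).erase 0 else {0})
    with hA
  have hmemA : ∀ s f, f ∈ A s ↔ ∀ i, (i ∈ s ↔ f i ≠ 0) := by
    intro s f
    rw [hA, Fintype.mem_piFinset]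
    constructor
    · intro hf i
      have := hf i
      by_cases hi : i ∈ s <;> simp [hi] at this ⊢ <;> tauto
    · intro hf i
      by_cases hi : i ∈ s
      · simp only [hi, if_true, Finset.mem_erase, Finset.mem_univ, and_true]
        exact (hf i).mp hi
      · simp only [hi, if_false, Finset.mem_singleton]
        by_contra hne
        exact hi ((hf i).mpr hne)
  have hsplit : (univ.filter fun f : Fin n → ZMod 2 × ZMod 2 =>
      (univ.filter fun i => f i ≠ 0).card = m)
      = (Finset.powersetCard m univ).biUnion A := by
    ext f
    simp only [Finset.mem_filter, Finset.mem_univ, true_and, Finset.mem_biUnion,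
      Finset.mem_powersetCard]
    constructor
    · intro hf
      refine ⟨univ.filter fun i => f i ≠ 0, ⟨Finset.subset_univ _, hf⟩, ?_⟩
      rw [hmemA]; intro i; simp
    · rintro ⟨s, ⟨_, hcard⟩, hfs⟩
      rw [hmemA] at hfs
      have : univ.filter (fun i => f i ≠ 0) = s := by
        ext i; simp [← hfs i]
      rw [this, hcard]
  have hdisj : ∀ s ∈ Finset.powersetCard m (univ : Finset (Fin n)),
      ∀ t ∈ Finset.powersetCard m (univ : Finset (Fin n)), s ≠ t → Disjoint (A s) (A t) := by
    intro s hs t ht hst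
    rw [Finset.disjoint_left]
    intro f hfs hft
    apply hst
    ext i
    rw [hmemA] at hfs hft
    rw [hfs i, hft i]
  rw [hsplit, Finset.card_biUnion hdisj]
  have hAcard : ∀ s ∈ Finset.powersetCard m (univ : Finset (Fin n)), (A s).card = 3 ^ m := by
    intro s hs
    rw [Finset.mem_powersetCard] at hs
    rw [hA, Fintype.card_piFinset]
    have heach : ∀ i : Fin n,
        (if i ∈ s then (univ : Finset (ZMod 2 × ZMod 2)).erase 0 else {0}).card
        = if i ∈ s then 3 else 1 := by
      intro i; by_cases hi : i ∈ s <;> simp [hi, hA3]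
    rw [Finset.prod_congr rfl (fun i _ => heach i), Fintype.prod_ite_mem,
      Finset.prod_const, hs.2]
  rw [Finset.sum_congr rfl hAcard, Finset.sum_const, Finset.card_powersetCard,
    Finset.card_univ, Fintype.card_fin, smul_eq_mul]

lemma card_weight (m : ℕ) :
    (univ.filter fun v : V n => sympWeight v = m).card = n.choose m * 3 ^ m := by
  classical
  rw [← card_fun_weight (n := n) m]
  apply Finset.card_equiv (Equiv.arrowProdEquivProdArrow (Fin n) (fun _ => ZMod 2) (fun _ => ZMod 2)).symm
  intro v
  simp only [Finset.mem_filter, Finset.mem_univ, true_and]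
  have : ∀ i, ((Equiv.arrowProdEquivProdArrow (Fin n) (fun _ => ZMod 2) (fun _ => ZMod 2)).symm v i ≠ 0)
      ↔ (v.1 i ≠ 0 ∨ v.2 i ≠ 0) := by
    intro i
    simp only [Equiv.arrowProdEquivProdArrow, Equiv.coe_fn_symm_mk, ne_eq, Prod.mk_eq_zero,
      not_and_or]
  unfold sympWeight
  rw [Finset.filter_congr (fun i _ => (this i))]

lemma card_bad (d : ℕ) (hd : 1 ≤ d) :
    (univ.filter fun v : V n => v ≠ 0 ∧ sympWeight v ≤ d - 1).card
      = ∑ i ∈ Finset.Icc 1 (d-1), n.choose i * 3 ^ i := by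
  classical
  rw [Finset.card_eq_sum_card_fiberwise
    (f := sympWeight) (t := Finset.Icc 1 (d-1)) ?_]
  · apply Finset.sum_congr rfl
    intro i hi
    rw [Finset.mem_Icc] at hi
    rw [← card_weight (n := n) i]
    congr 1
    ext v
    simp only [Finset.mem_filter, Finset.mem_univ, true_and]
    constructor
    · rintro ⟨⟨_, _⟩, h⟩; exact h
    · intro h
      refine ⟨⟨?_, by omega⟩, h⟩
      intro h0
      rw [h0] at h
      have := (sympWeight_eq_zero_iff (0 : V n)).mpr rfl
      omega
  · intro v hv
    rw [Finset.mem_coe, Finset.mem_filter] at hv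
    rw [Finset.mem_coe, Finset.mem_Icc]
    have h0 : sympWeight v ≠ 0 := fun hh => hv.2.1 ((sympWeight_eq_zero_iff v).mp hh)
    exact ⟨by omega, hv.2.2⟩

noncomputable instance : Fintype (Submodule (ZMod 2) (V n)) := by
  classical
  exact Fintype.ofInjective (fun C => (SetLike.coe C : Set (V n))) SetLike.coe_injective

lemma finrank_V : Module.finrank (ZMod 2) (V n) = 2 * n := by
  rw [Module.finrank_prod, Module.finrank_pi]
  simp [two_mul]

lemma card_submodule (C : Submodule (ZMod 2) (V n)) [DecidablePred (· ∈ C)] :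
    (univ.filter (fun v : V n => v ∈ C)).card = 2 ^ (Module.finrank (ZMod 2) C) := by
  classical
  rw [← Fintype.card_subtype]
  have : Fintype.card {x // x ∈ C} = Fintype.card (ZMod 2) ^ Module.finrank (ZMod 2) C :=
    Module.card_eq_pow_finrank
  rw [this, ZMod.card]

lemma orth_map (g : V n ≃ₗ[ZMod 2] V n)
    (hg : ∀ x y, sympForm n (g x) (g y) = sympForm n x y)
    (C : Submodule (ZMod 2) (V n)) :
    (sympForm n).orthogonal (Submodule.map (g : V n →ₗ[ZMod 2] V n) C)
      = Submodule.map (g : V n →ₗ[ZMod 2] V n) ((sympForm n).orthogonal C) := by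
  ext x
  rw [LinearMap.BilinForm.mem_orthogonal_iff, Submodule.mem_map_equiv,
    LinearMap.BilinForm.mem_orthogonal_iff]
  constructor
  · intro hx c hc
    have := hx (g c) (Submodule.mem_map_of_mem hc)
    rw [show x = g (g.symm x) from (g.apply_symm_apply x).symm, hg] at this
    exact this
  · intro hx y hy
    rw [Submodule.mem_map] at hy
    obtain ⟨c, hc, rfl⟩ := hy
    have := hx c hc
    simp only [LinearEquiv.coe_coe]
    rw [show x = g (g.symm x) from (g.apply_symm_apply x).symm, hg]
    exact this

lemma exists_base_code (r : ℕ) (hr : r ≤ n) :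
    ∃ C : Submodule (ZMod 2) (V n), Module.finrank (ZMod 2) C = r ∧
      C ≤ (sympForm n).orthogonal C := by
  classical
  set b : Fin r → V n := fun j => (Pi.single (Fin.castLE hr j) 1, 0) with hb
  have hli : LinearIndependent (ZMod 2) b := by
    have h1 : LinearIndependent (ZMod 2)
        (fun j : Fin r => (Pi.single (Fin.castLE hr j) 1 : Fin n → ZMod 2)) := by
      have := (Pi.basisFun (ZMod 2) (Fin n)).linearIndependent
      have hcomp := this.comp (Fin.castLE hr) (Fin.castLE_injective hr)
      convert hcomp using 2 with j
      simp only [Function.comp, Pi.basisFun_apply]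
    have hinj : Function.Injective (LinearMap.inl (ZMod 2) (Fin n → ZMod 2) (Fin n → ZMod 2)) :=
      LinearMap.inl_injective
    have := h1.map' (LinearMap.inl (ZMod 2) (Fin n → ZMod 2) (Fin n → ZMod 2))
      (LinearMap.ker_eq_bot.mpr hinj)
    exact this
  refine ⟨Submodule.span (ZMod 2) (Set.range b), ?_, ?_⟩
  · rw [finrank_span_eq_card hli, Fintype.card_fin]
  · have hsnd : ∀ v ∈ Submodule.span (ZMod 2) (Set.range b), Prod.snd v = (0 : Fin n → ZMod 2) := by
      intro v hv
      induction hv using Submodule.span_induction with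
      | mem x hx => obtain ⟨j, rfl⟩ := hx; rfl
      | zero => rfl
      | add x y _ _ hx hy => simp [Prod.snd_add, hx, hy]
      | smul c x _ hx => simp [Prod.smul_snd, hx]
    intro x hx
    rw [LinearMap.BilinForm.mem_orthogonal_iff]
    intro y hy
    show sympForm n y x = 0
    rw [sympForm_apply, hsnd x hx, hsnd y hy]
    simp

lemma map_map_symm (g : V n ≃ₗ[ZMod 2] V n) (C : Submodule (ZMod 2) (V n)) :
    Submodule.map (g.symm : V n →ₗ[ZMod 2] V n)
      (Submodule.map (g : V n →ₗ[ZMod 2] V n) C) = C := by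
  ext x
  simp [Submodule.mem_map_equiv]

open scoped Classical in
lemma count_const (r : ℕ) {v w : V n} (hv : v ≠ 0) (hw : w ≠ 0) :
    (((univ : Finset (Submodule (ZMod 2) (V n))).filter
        (fun C : Submodule (ZMod 2) (V n) => Module.finrank (ZMod 2) C = r ∧ C ≤ (sympForm n).orthogonal C)).filter
      (fun C => v ∈ (sympForm n).orthogonal C ∧ v ∉ C)).card
    = (((univ : Finset (Submodule (ZMod 2) (V n))).filter
        (fun C : Submodule (ZMod 2) (V n) => Module.finrank (ZMod 2) C = r ∧ C ≤ (sympForm n).orthogonal C)).filter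
      (fun C => w ∈ (sympForm n).orthogonal C ∧ w ∉ C)).card := by
  classical
  obtain ⟨g, hg, hgv⟩ := exists_isometry hv hw
  have hgsymm : ∀ x y, sympForm n (g.symm x) (g.symm y) = sympForm n x y := by
    intro x y
    rw [← hg (g.symm x) (g.symm y), g.apply_symm_apply, g.apply_symm_apply]
  have key : ∀ (g : V n ≃ₗ[ZMod 2] V n), (∀ x y, sympForm n (g x) (g y) = sympForm n x y) →
      ∀ u (C : Submodule (ZMod 2) (V n)),
      (Module.finrank (ZMod 2) C = r ∧ C ≤ (sympForm n).orthogonal C) ∧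
        (u ∈ (sympForm n).orthogonal C ∧ u ∉ C) →
      (Module.finrank (ZMod 2) (Submodule.map (g : V n →ₗ[ZMod 2] V n) C) = r ∧
          Submodule.map (g : V n →ₗ[ZMod 2] V n) C ≤
            (sympForm n).orthogonal (Submodule.map (g : V n →ₗ[ZMod 2] V n) C)) ∧
        (g u ∈ (sympForm n).orthogonal (Submodule.map (g : V n →ₗ[ZMod 2] V n) C) ∧
          g u ∉ Submodule.map (g : V n →ₗ[ZMod 2] V n) C) := by
    intro g hg u C ⟨⟨hrk, hso⟩, ⟨huo, huc⟩⟩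
    refine ⟨⟨?_, ?_⟩, ?_, ?_⟩
    · rw [LinearEquiv.finrank_map_eq]; exact hrk
    · rw [orth_map g hg]; exact Submodule.map_mono hso
    · rw [orth_map g hg, Submodule.mem_map_equiv, g.symm_apply_apply]; exact huo
    · rw [Submodule.mem_map_equiv, g.symm_apply_apply]; exact huc
  apply Finset.card_bij' (fun C _ => Submodule.map (g : V n →ₗ[ZMod 2] V n) C)
    (fun D _ => Submodule.map (g.symm : V n →ₗ[ZMod 2] V n) D)
  · intro C hC
    simp only [Finset.mem_filter, Finset.mem_univ, true_and] at hC ⊢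
    have := key g hg v C ⟨hC.1, hC.2⟩
    rw [hgv] at this
    exact ⟨this.1, this.2⟩
  · intro D hD
    simp only [Finset.mem_filter, Finset.mem_univ, true_and] at hD ⊢
    have := key g.symm hgsymm w D ⟨hD.1, hD.2⟩
    rw [show g.symm w = v by rw [← hgv, g.symm_apply_apply]] at this
    exact ⟨this.1, this.2⟩
  · intro C _; exact map_map_symm g C
  · intro D _
    have := map_map_symm g.symm D
    rwa [g.symm_symm] at this

lemma numeric_bound (n k d : ℕ) (hk1 : 1 ≤ k) (hkn : k ≤ n)
    (h : ((1 - 2 ^ (-(2 * k : ℤ)) : ℚ) / (1 - 2 ^ (-(2 * n : ℤ)))) *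
        2 ^ (-((n : ℤ) - k)) *
        ∑ i ∈ Finset.Icc 1 (d - 1), (n.choose i : ℚ) * 3 ^ i < 1) :
    (2 ^ (n + k) - 2 ^ (n - k)) * (∑ i ∈ Finset.Icc 1 (d - 1), n.choose i * 3 ^ i)
      < 2 ^ (2 * n) - 1 := by
  set T : ℕ := ∑ i ∈ Finset.Icc 1 (d - 1), n.choose i * 3 ^ i with hT
  have hS : (∑ i ∈ Finset.Icc 1 (d - 1), (n.choose i : ℚ) * 3 ^ i) = (T : ℚ) := by
    rw [hT]; push_cast; ring
  rw [hS] at h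
  rw [show (-(2 * k : ℤ)) = -((2 * k : ℕ) : ℤ) by push_cast; ring,
    show (-(2 * n : ℤ)) = -((2 * n : ℕ) : ℤ) by push_cast; ring,
    show (-((n : ℤ) - k)) = -((n - k : ℕ) : ℤ) by rw [Nat.cast_sub hkn],
    zpow_neg, zpow_neg, zpow_neg, zpow_natCast, zpow_natCast, zpow_natCast] at h
  set a : ℚ := 2 ^ k with ha
  set b : ℚ := 2 ^ (n - k) with hb
  have ha0 : (0:ℚ) < a := by positivity
  have hb0 : (0:ℚ) < b := by positivity
  have e1 : (2:ℚ) ^ (2 * n) = a ^ 2 * b ^ 2 := by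
    rw [ha, hb, show 2 * n = (k + k) + ((n - k) + (n - k)) by omega]
    rw [pow_add, pow_add, pow_add]; ring
  have e2 : (2:ℚ) ^ (2 * k) = a ^ 2 := by
    rw [ha, show 2 * k = k + k by omega, pow_add]; ring
  have e3 : (2:ℚ) ^ (n + k) = a ^ 2 * b := by
    rw [ha, hb, show n + k = (k + k) + (n - k) by omega, pow_add, pow_add]; ring
  rw [e1, e2] at h
  have hab1 : (1:ℚ) < a ^ 2 * b ^ 2 := by
    rw [← e1]
    apply one_lt_pow₀ (by norm_num : (1:ℚ) < 2)
    omega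
  have hd0 : (0:ℚ) < 1 - (a ^ 2 * b ^ 2)⁻¹ := by
    rw [sub_pos, inv_lt_one_iff₀]
    right; exact hab1
  rw [div_mul_eq_mul_div, div_mul_eq_mul_div, div_lt_one hd0] at h
  have h2 := mul_lt_mul_of_pos_right h (by positivity : (0:ℚ) < a ^ 2 * b ^ 2)
  have hL : (1 - (a ^ 2)⁻¹) * b⁻¹ * (T:ℚ) * (a ^ 2 * b ^ 2) = (a ^ 2 * b - b) * T := by
    field_simp
  have hR : (1 - (a ^ 2 * b ^ 2)⁻¹) * (a ^ 2 * b ^ 2) = a ^ 2 * b ^ 2 - 1 := by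
    field_simp
  rw [hL, hR] at h2
  have hq : ((2:ℚ) ^ (n + k) - 2 ^ (n - k)) * T < 2 ^ (2 * n) - 1 := by
    rw [e1, e3, ← hb]; exact h2
  have hle1 : 2 ^ (n - k) ≤ 2 ^ (n + k) := Nat.pow_le_pow_right (by norm_num) (by omega)
  have hle2 : 1 ≤ 2 ^ (2 * n) := Nat.one_le_two_pow
  rw [← Nat.cast_lt (α := ℚ)]
  push_cast [Nat.cast_sub hle1, Nat.cast_sub hle2]
  convert hq using 2 <;> push_cast <;> ring

end IQGV

open Finset IQGV in
theorem improved_quantum_gilbert_varshamov (n k d : ℕ) (hk1 : 1 ≤ k)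
    (hkn : k ≤ n) (hd : 1 ≤ d)
    (h : ((1 - 2 ^ (-(2 * k : ℤ)) : ℚ) / (1 - 2 ^ (-(2 * n : ℤ)))) *
        2 ^ (-((n : ℤ) - k)) *
        ∑ i ∈ Finset.Icc 1 (d - 1), (n.choose i : ℚ) * 3 ^ i < 1) :
    ∃ C : Submodule (ZMod 2) ((Fin n → ZMod 2) × (Fin n → ZMod 2)),
      Module.finrank (ZMod 2) C = n - k ∧ C ≤ (sympForm n).orthogonal C ∧
      ∀ v, v ∈ (sympForm n).orthogonal C → v ∉ C → v ≠ 0 → d ≤ sympWeight v := by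
  classical
  have hn1 : 1 ≤ n := le_trans hk1 hkn
  obtain ⟨C₀, hC₀r, hC₀o⟩ := exists_base_code (n := n) (n - k) (by omega)
  set 𝒞 : Finset (Submodule (ZMod 2) (V n)) :=
    univ.filter (fun C : Submodule (ZMod 2) (V n) =>
      Module.finrank (ZMod 2) C = n - k ∧ C ≤ (sympForm n).orthogonal C) with h𝒞
  have hC₀mem : C₀ ∈ 𝒞 := by rw [h𝒞, Finset.mem_filter]; exact ⟨Finset.mem_univ _, hC₀r, hC₀o⟩
  have h𝒞pos : 0 < 𝒞.card := Finset.card_pos.mpr ⟨C₀, hC₀mem⟩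
  set T : ℕ := ∑ i ∈ Finset.Icc 1 (d - 1), n.choose i * 3 ^ i with hT
  set Bad : Finset (V n) := univ.filter (fun v : V n => v ≠ 0 ∧ sympWeight v ≤ d - 1) with hBad
  have hBadcard : Bad.card = T := card_bad d hd
  set N : V n → ℕ := fun v => (𝒞.filter
    (fun C => v ∈ (sympForm n).orthogonal C ∧ v ∉ C)).card with hN
  set NZ : Finset (V n) := univ.filter (fun v : V n => v ≠ 0) with hNZ
  have hNZcard : NZ.card = 2 ^ (2 * n) - 1 := by
    rw [hNZ, Finset.filter_ne', Finset.card_erase_of_mem (Finset.mem_univ _), Finset.card_univ]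
    have : Fintype.card (V n) = 2 ^ (2 * n) := by
      rw [Fintype.card_prod, Fintype.card_fun, ZMod.card, Fintype.card_fin, ← pow_add]
      congr 1; omega
    rw [this]
  -- swap lemma
  have swap : ∀ S : Finset (V n), ∑ v ∈ S, N v =
      ∑ C ∈ 𝒞, (S.filter (fun v => v ∈ (sympForm n).orthogonal C ∧ v ∉ C)).card := by
    intro S
    simp only [hN, Finset.card_filter]
    rw [Finset.sum_comm]
  -- cardinality of C^⊥ \ C
  have stepA : ∀ C ∈ 𝒞,
      (univ.filter (fun v : V n => v ∈ (sympForm n).orthogonal C ∧ v ∉ C)).card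
        = 2 ^ (n + k) - 2 ^ (n - k) := by
    intro C hC
    rw [h𝒞, Finset.mem_filter] at hC
    obtain ⟨-, hrk, hso⟩ := hC
    have horth : Module.finrank (ZMod 2) ((sympForm n).orthogonal C) = n + k := by
      rw [LinearMap.BilinForm.finrank_orthogonal sympForm_nondeg C,
        finrank_V, hrk]
      omega
    have hsplit : univ.filter (fun v : V n => v ∈ (sympForm n).orthogonal C ∧ v ∉ C)
        = (univ.filter (fun v : V n => v ∈ (sympForm n).orthogonal C))
          \ (univ.filter (fun v : V n => v ∈ C)) := by
      ext v
      simp only [Finset.mem_filter, Finset.mem_sdiff, Finset.mem_univ, true_and]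
    have hsub : (univ.filter (fun v : V n => v ∈ C))
        ⊆ univ.filter (fun v : V n => v ∈ (sympForm n).orthogonal C) := by
      intro v hv
      rw [Finset.mem_filter] at hv ⊢
      exact ⟨hv.1, hso hv.2⟩
    rw [hsplit, Finset.card_sdiff_of_subset hsub, card_submodule, card_submodule, horth, hrk]
  -- nonzero vector v₀
  set v₀ : V n := (Pi.single (⟨0, by omega⟩ : Fin n) 1, 0) with hv₀def
  have hv₀ : v₀ ≠ 0 := by
    intro hcon
    have := congrArg (fun v : V n => v.1 ⟨0, by omega⟩) hcon
    simp only [hv₀def, Pi.single_eq_same] at this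
    exact one_ne_zero this
  have hconst : ∀ v ∈ NZ, N v = N v₀ := by
    intro v hv
    rw [hNZ, Finset.mem_filter] at hv
    exact count_const (n - k) hv.2 hv₀
  -- total count
  have stepC : (2 ^ (2 * n) - 1) * N v₀ = 𝒞.card * (2 ^ (n + k) - 2 ^ (n - k)) := by
    have h1 : ∑ v ∈ NZ, N v = NZ.card * N v₀ := by
      rw [Finset.sum_congr rfl hconst, Finset.sum_const, smul_eq_mul]
    have h2 : ∑ v ∈ NZ, N v = ∑ C ∈ 𝒞, (2 ^ (n + k) - 2 ^ (n - k)) := by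
      rw [swap NZ]
      apply Finset.sum_congr rfl
      intro C hC
      rw [← stepA C hC]
      congr 1
      ext v
      simp only [hNZ, Finset.mem_filter, Finset.mem_univ, true_and]
      constructor
      · tauto
      · intro hvv
        exact ⟨fun h0 => hvv.2 (h0 ▸ C.zero_mem), hvv⟩
    rw [← hNZcard, ← h1, h2, Finset.sum_const, smul_eq_mul]
  -- bad count
  have stepD : ∑ v ∈ Bad, N v = T * N v₀ := by
    have : ∀ v ∈ Bad, N v = N v₀ := by
      intro v hv
      apply hconst
      rw [hBad, Finset.mem_filter] at hv
      rw [hNZ, Finset.mem_filter]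
      exact ⟨hv.1, hv.2.1⟩
    rw [Finset.sum_congr rfl this, Finset.sum_const, smul_eq_mul, hBadcard]
  have hnum : (2 ^ (n + k) - 2 ^ (n - k)) * T < 2 ^ (2 * n) - 1 :=
    numeric_bound n k d hk1 hkn h
  -- T * N v₀ < 𝒞.card
  have hmain : T * N v₀ < 𝒞.card := by
    have h1 : T * N v₀ * (2 ^ (2 * n) - 1)
        = 𝒞.card * ((2 ^ (n + k) - 2 ^ (n - k)) * T) := by
      calc T * N v₀ * (2 ^ (2 * n) - 1) = T * ((2 ^ (2 * n) - 1) * N v₀) := by ring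
      _ = T * (𝒞.card * (2 ^ (n + k) - 2 ^ (n - k))) := by rw [stepC]
      _ = 𝒞.card * ((2 ^ (n + k) - 2 ^ (n - k)) * T) := by ring
    have h2 : 𝒞.card * ((2 ^ (n + k) - 2 ^ (n - k)) * T) < 𝒞.card * (2 ^ (2 * n) - 1) :=
      mul_lt_mul_of_pos_left hnum h𝒞pos
    rw [← h1] at h2
    exact lt_of_mul_lt_mul_right h2 (Nat.zero_le _)
  -- find good code
  have hex : ∃ C ∈ 𝒞,
      (Bad.filter (fun v => v ∈ (sympForm n).orthogonal C ∧ v ∉ C)).card = 0 := by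
    by_contra hcon
    push_neg at hcon
    have hone : ∀ C ∈ 𝒞, 1 ≤ (Bad.filter
        (fun v => v ∈ (sympForm n).orthogonal C ∧ v ∉ C)).card := by
      intro C hC
      exact Nat.one_le_iff_ne_zero.mpr (hcon C hC)
    have := Finset.sum_le_sum hone
    rw [Finset.sum_const, smul_eq_mul, mul_one, ← swap Bad, stepD] at this
    omega
  obtain ⟨C, hCmem, hCzero⟩ := hex
  rw [h𝒞, Finset.mem_filter] at hCmem
  refine ⟨C, hCmem.2.1, hCmem.2.2, ?_⟩
  intro v hvo hvc hv0
  by_contra hw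
  push_neg at hw
  have hvbad : v ∈ Bad.filter (fun v => v ∈ (sympForm n).orthogonal C ∧ v ∉ C) := by
    rw [Finset.mem_filter, hBad, Finset.mem_filter]
    exact ⟨⟨Finset.mem_univ _, hv0, by omega⟩, hvo, hvc⟩
  rw [Finset.card_eq_zero] at hCzero
  rw [hCzero] at hvbad
  exact absurd hvbad (Finset.notMem_empty v)
end

section
/- Define the 𝔽_2-bilinear form on 𝔽_4^n by B(x,y) = ⟨x²,y⟩ - ⟨x,y²⟩ where x² = (x_1²,...,x_n²) and ⟨·,·⟩ is the standard bilinear form on 𝔽_4^n. Then for any 𝔽_4-linear subspace C ⊆ 𝔽_4^n, the orthogonal complement of C with respect to B equals the orthogonal complement of C with respect to the hermitian form τ(x,y) = ⟨x²,y⟩. -/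
/-- The field with four elements. -/
abbrev F4 : Type := GaloisField 2 2

/-- The 𝔽₂-bilinear form `B(x,y) = ⟨x²,y⟩ - ⟨x,y²⟩` on `𝔽₄ⁿ`. -/
noncomputable def traceForm {n : ℕ} (x y : Fin n → F4) : F4 :=
  (∑ i, (x i) ^ 2 * y i) - ∑ i, x i * (y i) ^ 2

/-- The standard hermitian form `τ(x,y) = ⟨x²,y⟩ = Σ xᵢ² yᵢ` on `𝔽₄ⁿ`. -/
noncomputable def hermForm {n : ℕ} (x y : Fin n → F4) : F4 :=
  ∑ i, (x i) ^ 2 * y i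

/-!
Writing `t = τ(x,y)`, Frobenius gives `τ(y,x) = t²`, so `B(x,y) = t - t²`, and `τ(a • x, y) = a² t`.
If `B(x, ·)` vanishes at `y` along the whole line `𝔽₄ x ⊆ C`, then `t = t²` and, testing `a² • x`,
`a t = a² t²` for all `a` (as `a⁴ = a`), hence `(a - a²) t = 0`; choosing `a ∉ 𝔽₂` forces `t = 0`.
-/

namespace F4

theorem natCard : Nat.card F4 = 4 :=
  GaloisField.card 2 2 two_ne_zero

theorem pow_four (a : F4) : a ^ 4 = a := by
  have := Fintype.ofFinite F4
  simpa only [Fintype.card_eq_nat_card, natCard] using FiniteField.pow_card a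

theorem exists_sq_ne_self : ∃ a : F4, a ^ 2 ≠ a := by
  by_contra! h
  have hsurj : Function.Surjective fun b : Bool => if b then (1 : F4) else 0 := by
    intro a
    rcases IsIdempotentElem.iff_eq_zero_or_one.mp (sq a ▸ h a : a * a = a) with rfl | rfl
    exacts [⟨false, rfl⟩, ⟨true, rfl⟩]
  have := Nat.card_le_card_of_surjective _ hsurj
  simp [natCard] at this

theorem eq_zero_of_forall_sub_sq_eq_zero {t : F4} (h : ∀ a : F4, a * t - (a * t) ^ 2 = 0) :
    t = 0 := by
  obtain ⟨a, ha⟩ := exists_sq_ne_self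
  have h1 : t - t ^ 2 = 0 := by simpa using h 1
  have : (a - a ^ 2) * t = 0 := by linear_combination h a - a ^ 2 * h1
  exact (mul_eq_zero.mp this).resolve_left (sub_ne_zero.mpr ha.symm)

end F4

section Forms

variable {n : ℕ}

theorem hermForm_swap (x y : Fin n → F4) : hermForm y x = hermForm x y ^ 2 := by
  simp only [hermForm, sum_pow_char]
  refine Finset.sum_congr rfl fun i _ => ?_
  linear_combination (-(y i) ^ 2) * F4.pow_four (x i)

theorem traceForm_eq_hermForm_sub_sq (x y : Fin n → F4) :
    traceForm x y = hermForm x y - hermForm x y ^ 2 := by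
  rw [← hermForm_swap, traceForm, hermForm, hermForm]
  simp only [mul_comm]

theorem hermForm_smul_left (a : F4) (x y : Fin n → F4) :
    hermForm (a • x) y = a ^ 2 * hermForm x y := by
  simp only [hermForm, Finset.mul_sum, Pi.smul_apply, smul_eq_mul, mul_pow, mul_assoc]

end Forms

theorem orthogonal_traceForm_eq_orthogonal_hermForm (n : ℕ)
    (C : Submodule F4 (Fin n → F4)) :
    {y : Fin n → F4 | ∀ x ∈ C, traceForm x y = 0} =
      {y : Fin n → F4 | ∀ x ∈ C, hermForm x y = 0} := by
  ext y
  refine ⟨fun h x hx => F4.eq_zero_of_forall_sub_sq_eq_zero fun a => ?_, fun h x hx => ?_⟩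
  · have := h (a ^ 2 • x) (C.smul_mem _ hx)
    rwa [traceForm_eq_hermForm_sub_sq, hermForm_smul_left, ← pow_mul, F4.pow_four] at this
  · rw [traceForm_eq_hermForm_sub_sq, h x hx]
    ring
end

section
/- The number of nonzero vectors x ∈ 𝔽_4^n with τ(x,x) = 0, where τ(x,y) = Σ x_i² y_i, equals 2^{2n-1} + (-1)^n 2^{n-1} - 1. -/
noncomputable instance : Fintype F4 := Fintype.ofFinite _

attribute [local instance] Classical.propDecidable

lemma F4_card : Fintype.card F4 = 4 := by
  simpa using GaloisField.card 2 2 (by norm_num)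

lemma F4_cube {a : F4} (h : a ≠ 0) : a ^ 3 = 1 := by
  have := FiniteField.pow_card_sub_one_eq_one a h
  rw [F4_card] at this; simpa using this

open Finset in
lemma herm_diag_eq {n : ℕ} (x : Fin n → F4) :
    hermForm x x = ((univ.filter (fun i => x i ≠ 0)).card : F4) := by
  classical
  have : hermForm x x = ∑ i, (if x i ≠ 0 then (1 : F4) else 0) := by
    unfold hermForm
    refine Finset.sum_congr rfl fun i _ => ?_
    by_cases h : x i = 0
    · simp [h]
    · rw [if_pos h, ← F4_cube h]; ring
  rw [this, Finset.sum_ite, Finset.sum_const, Finset.sum_const]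
  simp

open Finset in
lemma herm_diag_zero_iff {n : ℕ} (x : Fin n → F4) :
    hermForm x x = 0 ↔ Even (univ.filter (fun i => x i ≠ 0)).card := by
  classical
  rw [herm_diag_eq, CharP.cast_eq_zero_iff F4 2, Nat.even_iff]
  omega

open Finset in
lemma sum_sign :
    ∑ a : F4, (if a = 0 then (1 : ℤ) else -1) = -2 := by
  classical
  rw [Finset.sum_ite, Finset.sum_const, Finset.sum_const]
  have h1 : (univ.filter (fun a : F4 => a = 0)).card = 1 :=
    Finset.card_eq_one.mpr ⟨0, by ext a; simp⟩
  have h2 : (univ.filter (fun a : F4 => ¬ a = 0)).card = 3 := by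
    have := Finset.card_filter_add_card_filter_not
      (s := (univ : Finset F4)) (p := fun a => a = 0)
    rw [h1, Finset.card_univ, F4_card] at this
    omega
  rw [h1, h2]; norm_num

open Finset in
theorem card_nonzero_isotropic (n : ℕ) (hn : 1 ≤ n) :
    (Nat.card {x : Fin n → F4 | x ≠ 0 ∧ hermForm x x = 0} : ℤ) =
      2 ^ (2 * n - 1) + (-1) ^ n * 2 ^ (n - 1) - 1 := by
  classical
  set A : Finset (Fin n → F4) := univ.filter (fun x => hermForm x x = 0) with hA
  -- character sum
  have key : ∑ x : Fin n → F4, ∏ i, (if x i = 0 then (1 : ℤ) else -1) = (-2 : ℤ) ^ n := by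
    have h := Finset.prod_univ_sum (fun _ : Fin n => (univ : Finset F4))
        (fun _ a => if a = 0 then (1 : ℤ) else -1)
    rw [Fintype.piFinset_univ] at h
    rw [← h]
    simp [sum_sign]
  have prod_eq : ∀ x : Fin n → F4,
      ∏ i, (if x i = 0 then (1 : ℤ) else -1)
        = (-1 : ℤ) ^ (univ.filter (fun i => x i ≠ 0)).card := by
    intro x
    rw [Finset.prod_ite, Finset.prod_const, Finset.prod_const]
    simp [Finset.filter_not]
  have split : (A.card : ℤ) - ((univ.filter (fun x : Fin n → F4 => ¬ hermForm x x = 0)).card : ℤ)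
      = (-2 : ℤ) ^ n := by
    have e1 : ∑ x ∈ A, (∏ i, (if x i = 0 then (1 : ℤ) else -1)) = (A.card : ℤ) := by
      rw [Finset.sum_congr rfl (fun x hx => ?_)]
      · rw [Finset.sum_const, nsmul_eq_mul, mul_one]
      · rw [prod_eq x]
        exact Even.neg_one_pow ((herm_diag_zero_iff x).mp (by simpa [hA] using hx))
    have e2 : ∑ x ∈ univ.filter (fun x : Fin n → F4 => ¬ hermForm x x = 0),
        (∏ i, (if x i = 0 then (1 : ℤ) else -1))
        = -((univ.filter (fun x : Fin n → F4 => ¬ hermForm x x = 0)).card : ℤ) := by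
      rw [Finset.sum_congr rfl (fun x hx => ?_)]
      · rw [Finset.sum_const, nsmul_eq_mul, mul_neg_one]
      · rw [prod_eq x]
        refine Odd.neg_one_pow (Nat.not_even_iff_odd.mp fun he => ?_)
        exact (Finset.mem_filter.mp hx).2 ((herm_diag_zero_iff x).mpr he)
    have := Finset.sum_filter_add_sum_filter_not univ (fun x : Fin n → F4 => hermForm x x = 0)
      (fun x => ∏ i, (if x i = 0 then (1 : ℤ) else -1))
    rw [← hA] at this
    rw [e1, e2, key] at this
    linarith
  have total : A.card + (univ.filter (fun x : Fin n → F4 => ¬ hermForm x x = 0)).card = 4 ^ n := by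
    rw [Finset.card_filter_add_card_filter_not, Finset.card_univ,
      Fintype.card_fun, F4_card, Fintype.card_fin]
  have twoA : 2 * (A.card : ℤ) = 4 ^ n + (-2 : ℤ) ^ n := by
    have := congrArg (fun k : ℕ => (k : ℤ)) total
    push_cast at this
    linarith [split, this]
  -- the target set is A minus the zero vector
  have hzeroA : (0 : Fin n → F4) ∈ A := by
    rw [hA, Finset.mem_filter]
    exact ⟨Finset.mem_univ _, by simp [hermForm]⟩
  have hcard : Nat.card {x : Fin n → F4 | x ≠ 0 ∧ hermForm x x = 0} = A.card - 1 := by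
    rw [Nat.card_eq_fintype_card, Fintype.card_subtype, ← Finset.card_erase_of_mem hzeroA]
    congr 1
    rw [hA, ← Finset.filter_ne' , Finset.filter_filter]
    apply Finset.filter_congr
    intro x _
    simp [and_comm]
  rw [hcard]
  have hA1 : 1 ≤ A.card := Finset.card_pos.mpr ⟨0, hzeroA⟩
  clear key prod_eq split total hA hzeroA hcard
  clear_value A
  obtain ⟨m, rfl⟩ : ∃ m, n = m + 1 := ⟨n - 1, by omega⟩
  have h1 : 2 * (m + 1) - 1 = 2 * m + 1 := by omega
  have h2 : m + 1 - 1 = m := by omega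
  rw [h1, h2]
  have hc : ((A.card - 1 : ℕ) : ℤ) = (A.card : ℤ) - 1 := by
    have : (1:ℕ) ≤ A.card := hA1
    omega
  rw [hc]
  have h4 : (4 : ℤ) ^ (m + 1) = 2 * 2 ^ (2 * m + 1) := by
    have : (4 : ℤ) ^ (m + 1) = ((2:ℤ)^2) ^ (m+1) := by norm_num
    rw [this, ← pow_mul, show 2 * (m+1) = (2*m+1)+1 by ring, pow_succ]
    ring
  have h5 : (-2 : ℤ) ^ (m + 1) = 2 * ((-1) ^ (m+1) * 2 ^ m) := by
    rw [show (-2:ℤ) = -1 * 2 by norm_num, mul_pow, pow_succ 2 m]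
    ring
  rw [h4, h5] at twoA
  linarith
end

section
/- For 0 ≤ ε < λ ≤ 1 with ε > 0 and λ < 1, Σ_{i=⌈λn⌉}^{n} binom(n,i) ε^i (1-ε)^{n-i} ≤ 2^{-n·D(λ‖ε)}, where D(λ‖ε) = λ log₂(λ/ε) + (1-λ) log₂((1-λ)/(1-ε)). -/
/-!
Chernoff's method: for every `r ≥ 1`, bounding the indicator of `i ≥ l n` by `r ^ (i - l n)` and
summing over all `i` bounds the tail by `(e r + 1 - e) ^ n / r ^ (l n)`. The optimal choice is the
odds ratio `r = (l / e) · ((1 - e) / (1 - l))`, for which `e r + 1 - e = (1 - e) / (1 - l)` and the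
bound becomes exactly `2 ^ (-n D(l‖e))`.
-/

open Real

/-- Binary Kullback–Leibler divergence (base-2). -/
noncomputable def klDiv2 (l e : ℝ) : ℝ :=
  l * Real.logb 2 (l / e) + (1 - l) * Real.logb 2 ((1 - l) / (1 - e))

open Finset

theorem binomial_tail_le_pow_div_rpow {p r : ℝ} (n : ℕ) (t : ℝ) (hp0 : 0 ≤ p)
    (hp1 : p ≤ 1) (hr : 1 ≤ r) :
    ∑ i ∈ Icc ⌈t⌉₊ n, (n.choose i : ℝ) * p ^ i * (1 - p) ^ (n - i) ≤
      (p * r + (1 - p)) ^ n / r ^ t := by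
  have hrt : 0 < r ^ t := rpow_pos_of_pos (by linarith) t
  have hq : 0 ≤ 1 - p := by linarith
  calc ∑ i ∈ Icc ⌈t⌉₊ n, (n.choose i : ℝ) * p ^ i * (1 - p) ^ (n - i)
      ≤ ∑ i ∈ Icc ⌈t⌉₊ n,
          (n.choose i : ℝ) * p ^ i * (1 - p) ^ (n - i) * r ^ i / r ^ t := by
        refine sum_le_sum fun i hi ↦ ?_
        have hti : t ≤ i := Nat.ceil_le.mp (mem_Icc.mp hi).1
        have : r ^ t ≤ r ^ i := by
          rw [← rpow_natCast]; exact rpow_le_rpow_of_exponent_le hr hti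
        rw [mul_div_assoc]
        exact le_mul_of_one_le_right (by positivity) ((one_le_div hrt).mpr this)
    _ ≤ ∑ i ∈ range (n + 1), (n.choose i : ℝ) * p ^ i * (1 - p) ^ (n - i) * r ^ i / r ^ t :=
        sum_le_sum_of_subset_of_nonneg (fun i hi ↦ by rw [mem_Icc] at hi; rw [mem_range]; omega)
          fun i _ _ ↦ by positivity
    _ = (p * r + (1 - p)) ^ n / r ^ t := by
        rw [← sum_div, add_pow]
        congr 1
        refine sum_congr rfl fun i _ ↦ ?_
        ring

theorem klDiv2_mul_log_two (l e : ℝ) :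
    klDiv2 l e * log 2 = l * log (l / e) + (1 - l) * log ((1 - l) / (1 - e)) := by
  have : log 2 ≠ 0 := (log_pos one_lt_two).ne'
  simp only [klDiv2, logb]
  field_simp

theorem pow_div_rpow_eq_two_rpow_neg_mul_klDiv2 {e l : ℝ} (n : ℕ) (he : 0 < e) (he1 : e < 1)
    (hl0 : 0 < l) (hl : l < 1) :
    ((1 - e) / (1 - l)) ^ n / (l / e * ((1 - e) / (1 - l))) ^ (l * n) =
      2 ^ (-(n : ℝ) * klDiv2 l e) := by
  have hq : 0 < (1 - e) / (1 - l) := div_pos (by linarith) (by linarith)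
  rw [← rpow_natCast, rpow_def_of_pos hq, rpow_def_of_pos (by positivity),
    rpow_def_of_pos two_pos, ← exp_sub, log_mul (by positivity) hq.ne',
    mul_comm (log 2), mul_assoc, klDiv2_mul_log_two, ← inv_div (1 - e), log_inv]
  ring_nf

theorem binomial_tail_chernoff (n : ℕ) (e l : ℝ) (he : 0 < e) (hel : e < l)
    (hl : l < 1) :
    ∑ i ∈ Finset.Icc ⌈l * n⌉₊ n,
        (n.choose i : ℝ) * e ^ i * (1 - e) ^ (n - i) ≤
      2 ^ (-(n : ℝ) * klDiv2 l e) := by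
  have he1 : e < 1 := hel.trans hl
  have hl0 : 0 < l := he.trans hel
  set r := l / e * ((1 - e) / (1 - l)) with hr_def
  have hr : 1 ≤ r :=
    one_le_mul_of_one_le_of_one_le ((one_le_div he).mpr hel.le)
      ((one_le_div (by linarith)).mpr (by linarith))
  have hmean : e * r + (1 - e) = (1 - e) / (1 - l) := by
    rw [hr_def]
    field_simp [(by linarith : 1 - l ≠ 0)]
    ring
  calc ∑ i ∈ Icc ⌈l * n⌉₊ n, (n.choose i : ℝ) * e ^ i * (1 - e) ^ (n - i)
      ≤ (e * r + (1 - e)) ^ n / r ^ (l * n) := binomial_tail_le_pow_div_rpow n _ he.le he1.le hr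
    _ = 2 ^ (-(n : ℝ) * klDiv2 l e) := by
        rw [hmean, pow_div_rpow_eq_two_rpow_neg_mul_klDiv2 n he he1 hl0 hl]
end
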